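/- (Williamson) For every real symmetric positive-definite 2N×2N matrix σ there exists a symplectic matrix B (i.e., Bᵀ·Ω·B = Ω) and positive real numbers ν₁,…,ν_N such that B·σ·Bᵀ = diag(ν₁,ν₁,…,ν_N,ν_N). -/

import Mathlib

/-!
Let `S = σ^{1/2}`. The matrix `A = S Ω S` is skew-symmetric and invertible, so the real normal
form of such matrices gives an orthogonal `O` and `ν > 0` with `Oᵀ A O = diag(ν) ⊗ J`,
`J = [[0,1],[-1,0]]`. That normal form comes from an induction on the dimension: for a unit
eigenvector `v` of the symmetric operator `A²`, the plane spanned by `v` and `A v` is invariant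
under `A`, and so is its orthogonal complement. With `D = diag(√ν) ⊗ 1` we have
`D Ω D = diag(ν) ⊗ J`, hence `B = D Oᵀ S⁻¹` satisfies `Bᵀ Ω B = S⁻¹ A S⁻¹ = Ω` and
`B σ Bᵀ = D² = diag(ν)`.
-/

open Matrix

/-- The standard symplectic form `⊕_N [[0,1],[-1,0]]` on a `2N`-dimensional space. -/
def stdOmega (N : ℕ) (R : Type) [Ring R] :
    Matrix (Fin N × Fin 2) (Fin N × Fin 2) R := fun i j =>
  if i.1 = j.1 then
    (if i.2 = 0 ∧ j.2 = 1 then 1 else if i.2 = 1 ∧ j.2 = 0 then -1 else 0)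
  else 0

open Module
open scoped Kronecker

local notation "⟪" x ", " y "⟫" => @inner ℝ _ _ x y

section SkewOperator

variable {E : Type*} [NormedAddCommGroup E] [InnerProductSpace ℝ E] {f : Module.End ℝ E}

lemma inner_self_map_eq_zero_of_skew (hf : ∀ x y, ⟪f x, y⟫ = -⟪x, f y⟫) (x : E) :
    ⟪x, f x⟫ = 0 := by
  have := hf x x
  rw [real_inner_comm] at this
  linarith

lemma isSymmetric_mul_self_of_skew (hf : ∀ x y, ⟪f x, y⟫ = -⟪x, f y⟫) :
    (f * f).IsSymmetric := fun x y => by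
  simp only [Module.End.mul_apply]
  rw [hf, hf x, neg_neg]

lemma orthogonal_mem_invtSubmodule_of_skew (hf : ∀ x y, ⟪f x, y⟫ = -⟪x, f y⟫)
    {K : Submodule ℝ E} (hK : K ∈ f.invtSubmodule) : Kᗮ ∈ f.invtSubmodule := by
  intro w hw u hu
  have hfu : f u ∈ K := hK hu
  rw [real_inner_comm, hf, Submodule.inner_left_of_mem_orthogonal hfu hw, neg_zero]

/-- The pair is `(f v / ‖f v‖, v)` for a unit eigenvector `v` of `f²`. -/
lemma exists_orthonormal_pair_of_skew [FiniteDimensional ℝ E] [Nontrivial E]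
    (hf : ∀ x y, ⟪f x, y⟫ = -⟪x, f y⟫) (hinj : Function.Injective f) :
    ∃ (u : Fin 2 → E) (ν : ℝ), 0 < ν ∧ Orthonormal ℝ u ∧
      f (u 0) = -ν • u 1 ∧ f (u 1) = ν • u 0 := by
  have hT := isSymmetric_mul_self_of_skew hf
  have i₀ : Fin (finrank ℝ E) := ⟨0, finrank_pos⟩
  set v := hT.eigenvectorBasis rfl i₀
  set μ := hT.eigenvalues rfl i₀
  have hv : ‖v‖ = 1 := (hT.eigenvectorBasis rfl).orthonormal.1 i₀
  have hffv : f (f v) = μ • v := hT.apply_eigenvectorBasis rfl i₀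
  set ν := ‖f v‖
  have hν : 0 < ν :=
    norm_pos_iff.mpr <| (map_ne_zero_iff f hinj).mpr <| norm_ne_zero_iff.mp (by simp [hv])
  have hμ : μ = -(ν * ν) := by
    have := hf (f v) v
    rw [hffv, real_inner_smul_left, real_inner_self_eq_norm_mul_norm, hv,
      real_inner_self_eq_norm_mul_norm] at this
    linarith
  have hfv : ‖ν⁻¹ • f v‖ = 1 := by rw [norm_smul, norm_inv, norm_norm, inv_mul_cancel₀ hν.ne']
  have hvfv : ⟪v, f v⟫ = 0 := inner_self_map_eq_zero_of_skew hf v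
  refine ⟨![ν⁻¹ • f v, v], ν, hν, ?_, ?_, ?_⟩
  · rw [orthonormal_iff_ite]
    intro i j
    fin_cases i <;> fin_cases j <;>
      simp [real_inner_smul_right, real_inner_comm v, hvfv, hv, hfv]
  · simp [hffv, hμ, smul_smul]
    field_simp
  · simp [smul_smul, hν.ne']

lemma orthonormal_uncurry_cons {ι : Type*} {N : ℕ} {u : ι → E} {w : Fin N × ι → E}
    (hu : Orthonormal ℝ u) (hw : Orthonormal ℝ w) (huw : ∀ i p, ⟪u i, w p⟫ = 0) :
    Orthonormal ℝ (Function.uncurry (Fin.cons u (Function.curry w) : Fin (N + 1) → ι → E)) := by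
  classical
  rw [orthonormal_iff_ite] at hu hw ⊢
  rintro ⟨I, s⟩ ⟨J, t⟩
  cases I using Fin.cases <;> cases J using Fin.cases <;>
    simp [hu, hw, huw, real_inner_comm (u _), Fin.succ_ne_zero, eq_comm (a := (0 : Fin _))]

theorem exists_orthonormal_normal_form_of_skew [FiniteDimensional ℝ E] {N : ℕ}
    (hdim : finrank ℝ E = 2 * N) (hf : ∀ x y, ⟪f x, y⟫ = -⟪x, f y⟫)
    (hinj : Function.Injective f) :
    ∃ (v : Fin N × Fin 2 → E) (ν : Fin N → ℝ), Orthonormal ℝ v ∧ (∀ I, 0 < ν I) ∧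
      ∀ I, f (v (I, 0)) = -ν I • v (I, 1) ∧ f (v (I, 1)) = ν I • v (I, 0) := by
  induction N generalizing E with
  | zero => exact ⟨isEmptyElim, isEmptyElim, ⟨isEmptyElim, isEmptyElim⟩, isEmptyElim, isEmptyElim⟩
  | succ N ih =>
    have : Nontrivial E := nontrivial_of_finrank_pos (R := ℝ) (by omega)
    obtain ⟨u, ν, hν, hu, hfu₀, hfu₁⟩ := exists_orthonormal_pair_of_skew hf hinj
    set K := Submodule.span ℝ (Set.range u)
    have hu_mem : ∀ i, u i ∈ K := fun i => Submodule.subset_span (Set.mem_range_self i)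
    have hK : K ∈ f.invtSubmodule := Submodule.span_le.mpr <| by
      rintro _ ⟨i, rfl⟩
      fin_cases i
      · exact (hfu₀ ▸ K.smul_mem _ (hu_mem 1) : f (u 0) ∈ K)
      · exact (hfu₁ ▸ K.smul_mem _ (hu_mem 0) : f (u 1) ∈ K)
    have hKdim : finrank ℝ Kᗮ = 2 * N := by
      have := K.finrank_add_finrank_orthogonal
      rw [finrank_span_eq_card hu.linearIndependent] at this
      simp at this
      omega
    obtain ⟨w, ν', hw, hν', hfw⟩ :=
      ih hKdim (f := f.restrict (orthogonal_mem_invtSubmodule_of_skew hf hK))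
        (fun x y => hf x y) (fun x y h => Subtype.ext (hinj (congrArg Subtype.val h)))
    refine ⟨Function.uncurry (Fin.cons u (Function.curry (Kᗮ.subtypeₗᵢ ∘ w))), Fin.cons ν ν',
      orthonormal_uncurry_cons hu (hw.comp_linearIsometry _) fun i p =>
        Submodule.inner_right_of_mem_orthogonal (hu_mem i) (w p).2, ?_, ?_⟩
    · intro I
      cases I using Fin.cases
      · simpa using hν
      · simpa using hν' _
    · intro I
      cases I using Fin.cases
      · exact ⟨by simpa using hfu₀, by simpa using hfu₁⟩
      · exact (hfw _).imp (congrArg Subtype.val) (congrArg Subtype.val)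

end SkewOperator

section EuclideanMatrix

variable {ι : Type*} [Fintype ι] [DecidableEq ι]

lemma transpose_mul_mul_apply_eq_inner (M : Matrix ι ι ℝ) (v : ι → EuclideanSpace ℝ ι)
    (j k : ι) :
    ((of fun i j => v j i)ᵀ * M * of fun i j => v j i) j k = ⟪v j, toEuclideanLin M (v k)⟫ := by
  simp only [Matrix.mul_apply, transpose_apply, of_apply, Finset.sum_mul, toLpLin_apply,
    PiLp.inner_apply, mulVec, dotProduct, RCLike.inner_apply, conj_trivial]
  rw [Finset.sum_comm]
  exact Finset.sum_congr rfl fun _ _ => Finset.sum_congr rfl fun _ _ => by ring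

lemma inner_toEuclideanLin_of_transpose_eq_neg {A : Matrix ι ι ℝ} (hA : Aᵀ = -A)
    (x y : EuclideanSpace ℝ ι) : ⟪toEuclideanLin A x, y⟫ = -⟪x, toEuclideanLin A y⟫ := by
  rw [← LinearMap.adjoint_inner_right, ← toEuclideanLin_conjTranspose_eq_adjoint,
    conjTranspose_eq_transpose_of_trivial, hA, map_neg, LinearMap.neg_apply, inner_neg_right]

lemma injective_toEuclideanLin_of_isUnit {A : Matrix ι ι ℝ} (hA : IsUnit A) :
    Function.Injective (toEuclideanLin A) := by
  intro x y h
  have := congrArg WithLp.ofLp h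
  simp only [toLpLin_apply] at this
  exact WithLp.ofLp_injective 2 (mulVec_injective_iff_isUnit.mpr hA this)

end EuclideanMatrix

theorem exists_orthogonal_transpose_mul_mul_eq_of_transpose_eq_neg {N : ℕ}
    {A : Matrix (Fin N × Fin 2) (Fin N × Fin 2) ℝ} (hA : Aᵀ = -A) (hAu : IsUnit A) :
    ∃ (O : Matrix (Fin N × Fin 2) (Fin N × Fin 2) ℝ) (ν : Fin N → ℝ),
      Oᵀ * O = 1 ∧ (∀ I, 0 < ν I) ∧ Oᵀ * A * O = diagonal ν ⊗ₖ !![0, 1; -1, 0] := by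
  obtain ⟨v, ν, hv, hν, hfv⟩ := exists_orthonormal_normal_form_of_skew (N := N)
    (by simp [mul_comm]) (inner_toEuclideanLin_of_transpose_eq_neg hA)
    (injective_toEuclideanLin_of_isUnit hAu)
  have hv' := orthonormal_iff_ite.mp hv
  refine ⟨of fun i j => v j i, ν, ?_, hν, ?_⟩
  · ext j k
    simpa [hv', one_apply] using transpose_mul_mul_apply_eq_inner 1 v j k
  · ext ⟨I, s⟩ ⟨J, t⟩
    rw [transpose_mul_mul_apply_eq_inner]
    by_cases h : I = J <;> fin_cases s <;> fin_cases t <;>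
      simp [(hfv J).1, (hfv J).2, inner_smul_right, hv', hv.1, h]

open scoped ComplexOrder MatrixOrder in
lemma Matrix.PosDef.exists_posDef_mul_self_eq {n 𝕜 : Type*} [Fintype n] [DecidableEq n]
    [RCLike 𝕜] {M : Matrix n n 𝕜} (hM : M.PosDef) : ∃ S : Matrix n n 𝕜, S.PosDef ∧ S * S = M :=
  ⟨CFC.sqrt M, (IsStrictlyPositive.sqrt M hM.isStrictlyPositive).posDef,
    CFC.sqrt_mul_sqrt_self M hM.posSemidef.nonneg⟩

section Conjugation

variable {n R : Type*} [Fintype n] [DecidableEq n] [CommRing R] {S O D : Matrix n n R}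

lemma transpose_mul_mul_eq_of_mul_mul_eq {Ω : Matrix n n R} (hS : Sᵀ = S) (hSdet : IsUnit S.det)
    (hO : Oᵀ * O = 1) (hD : Dᵀ = D) (hDΩD : D * Ω * D = Oᵀ * (S * Ω * S) * O) :
    (D * Oᵀ * S⁻¹)ᵀ * Ω * (D * Oᵀ * S⁻¹) = Ω := by
  have hOOT : ∀ X, O * (Oᵀ * X) = X := fun X => by
    rw [← Matrix.mul_assoc, mul_eq_one_comm.mp hO, Matrix.one_mul]
  calc (D * Oᵀ * S⁻¹)ᵀ * Ω * (D * Oᵀ * S⁻¹)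
      = S⁻¹ * O * (D * Ω * D) * Oᵀ * S⁻¹ := by
        simp [transpose_nonsing_inv, hS, hD, Matrix.mul_assoc]
    _ = Ω := by
        simp [hDΩD, Matrix.mul_assoc, hOOT, nonsing_inv_mul_cancel_left _ _ hSdet,
          mul_nonsing_inv _ hSdet]

lemma mul_mul_transpose_eq_mul_self (hS : Sᵀ = S) (hSdet : IsUnit S.det) (hO : Oᵀ * O = 1)
    (hD : Dᵀ = D) : D * Oᵀ * S⁻¹ * (S * S) * (D * Oᵀ * S⁻¹)ᵀ = D * D := by
  have hOTO : ∀ X, Oᵀ * (O * X) = X := fun X => by rw [← Matrix.mul_assoc, hO, Matrix.one_mul]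
  simp [transpose_nonsing_inv, hS, hD, Matrix.mul_assoc, hOTO,
    nonsing_inv_mul_cancel_left _ _ hSdet, mul_nonsing_inv_cancel_left _ _ hSdet]

end Conjugation

lemma diagonal_kronecker_one {m n α : Type*} [MulZeroOneClass α] [DecidableEq m]
    [DecidableEq n] (a : m → α) : diagonal a ⊗ₖ (1 : Matrix n n α) = diagonal fun i => a i.1 := by
  rw [← diagonal_one, diagonal_kronecker_diagonal]
  simp

section StdOmega

lemma stdOmega_eq_one_kronecker (N : ℕ) (R : Type) [Ring R] :
    stdOmega N R = 1 ⊗ₖ !![0, 1; -1, 0] := by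
  ext ⟨i, s⟩ ⟨j, t⟩
  by_cases h : i = j <;> fin_cases s <;> fin_cases t <;> simp [stdOmega, one_apply, h]

lemma stdOmega_transpose (N : ℕ) (R : Type) [Ring R] : (stdOmega N R)ᵀ = -stdOmega N R := by
  ext ⟨i, s⟩ ⟨j, t⟩
  by_cases h : i = j <;> fin_cases s <;> fin_cases t <;> simp [stdOmega, h, eq_comm]

lemma stdOmega_mul_self (N : ℕ) (R : Type) [CommRing R] :
    stdOmega N R * stdOmega N R = -1 := by
  rw [stdOmega_eq_one_kronecker, ← mul_kronecker_mul, one_mul]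
  ext ⟨i, s⟩ ⟨j, t⟩
  by_cases h : i = j <;> fin_cases s <;> fin_cases t <;> simp [one_apply, h]

lemma isUnit_stdOmega (N : ℕ) (R : Type) [CommRing R] : IsUnit (stdOmega N R) :=
  .of_mul_eq_one (-stdOmega N R) (by simp [stdOmega_mul_self])

lemma diagonal_kronecker_one_mul_stdOmega_mul (N : ℕ) (R : Type) [CommRing R]
    (a b : Fin N → R) :
    (diagonal a ⊗ₖ 1) * stdOmega N R * (diagonal b ⊗ₖ 1) =
      diagonal (fun I => a I * b I) ⊗ₖ !![0, 1; -1, 0] := by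
  rw [stdOmega_eq_one_kronecker, ← mul_kronecker_mul, ← mul_kronecker_mul]
  simp

end StdOmega

theorem stmt3_general (N : ℕ) (σ : Matrix (Fin N × Fin 2) (Fin N × Fin 2) ℝ)
    (hσpos : σ.PosDef) :
    ∃ (B : Matrix (Fin N × Fin 2) (Fin N × Fin 2) ℝ) (ν : Fin N → ℝ),
      Bᵀ * stdOmega N ℝ * B = stdOmega N ℝ ∧ (∀ I, 0 < ν I) ∧
        B * σ * Bᵀ = Matrix.diagonal (fun i => ν i.1) := by
  obtain ⟨S, hS, rfl⟩ := hσpos.exists_posDef_mul_self_eq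
  have hST : Sᵀ = S := hS.isHermitian
  have hSdet : IsUnit S.det := (isUnit_iff_isUnit_det S).mp hS.isUnit
  obtain ⟨O, ν, hO, hν, hOAO⟩ := exists_orthogonal_transpose_mul_mul_eq_of_transpose_eq_neg
    (A := S * stdOmega N ℝ * S) (by simp [stdOmega_transpose, hST, Matrix.mul_assoc])
    ((hS.isUnit.mul (isUnit_stdOmega N ℝ)).mul hS.isUnit)
  have hsqrt : ∀ I, √(ν I) * √(ν I) = ν I := fun I => Real.mul_self_sqrt (hν I).le
  set D := diagonal (fun I => √(ν I)) ⊗ₖ (1 : Matrix (Fin 2) (Fin 2) ℝ)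
  have hDT : Dᵀ = D := by simp [D, ← kroneckerMap_transpose]
  refine ⟨D * Oᵀ * S⁻¹, ν, ?_, hν, ?_⟩
  · exact transpose_mul_mul_eq_of_mul_mul_eq hST hSdet hO hDT
      (by simp [D, hOAO, diagonal_kronecker_one_mul_stdOmega_mul, hsqrt])
  · rw [mul_mul_transpose_eq_mul_self hST hSdet hO hDT]
    simp [D, hsqrt, diagonal_kronecker_one]

/-- (Williamson) Every real symmetric positive-definite `2N×2N` matrix `σ` can be brought to
the diagonal form `diag(ν₁,ν₁,…,ν_N,ν_N)` with `ν_I > 0` by a symplectic matrix `B`: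
`B·σ·Bᵀ = diag(ν₁,ν₁,…,ν_N,ν_N)`. -/
theorem stmt3 (N : ℕ) (σ : Matrix (Fin N × Fin 2) (Fin N × Fin 2) ℝ)
    (hσsymm : σ.IsSymm) (hσpos : σ.PosDef) :
    ∃ (B : Matrix (Fin N × Fin 2) (Fin N × Fin 2) ℝ) (ν : Fin N → ℝ),
      Bᵀ * stdOmega N ℝ * B = stdOmega N ℝ ∧ (∀ I, 0 < ν I) ∧
        B * σ * Bᵀ = Matrix.diagonal (fun i => ν i.1) :=
  stmt3_general N σ hσpos
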